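/- Let I be an ideal of the formal power series ring R = ℂ[[z_1,…,z_n]] generated by a (possibly infinite) family of homogeneous polynomials. If f ∈ R is integral over I, then for every k ∈ ℕ the degree-k homogeneous component of f (the polynomial Σ_{|α|=k} c_α z^α, where c_α is the coefficient of z^α in f, regarded as an element of R) is also integral over I. Consequently the set of elements of R integral over I is an ideal generated by homogeneous polynomials. -/

import Mathlib

/-- An element `f` of a commutative ring is *integral over the ideal* `I` if it satisfies an
equation `f ^ m + a 1 * f ^ (m-1) + ⋯ + a (m-1) * f + a m = 0` with `a j ∈ I ^ j`. -/
def IsIntegralOverIdeal {R : Type*} [CommRing R] (I : Ideal R) (f : R) : Prop :=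
  ∃ m : ℕ, 0 < m ∧ ∃ a : ℕ → R, (∀ j, 1 ≤ j → j ≤ m → a j ∈ I ^ j) ∧
    f ^ m + ∑ j ∈ Finset.Icc 1 m, a j * f ^ (m - j) = 0

/-- The degree-`k` homogeneous component of a formal power series: the polynomial
`Σ_{|α| = k} c_α z^α` (where `c_α` is the coefficient of `z^α` in `f`), regarded as an
element of `ℂ[[z_1,…,z_n]]`. -/
noncomputable def homogeneousComponent (n k : ℕ) (f : MvPowerSeries (Fin n) ℂ) :
    MvPowerSeries (Fin n) ℂ :=
  fun e => if (e.sum fun _ m => m) = k then MvPowerSeries.coeff e f else 0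

/-!
The rescalings `f(z) ↦ f(t z)`, `t ∈ ℂ`, are ring endomorphisms of `ℂ[[z]]` mapping `I` into
itself, since its generators are homogeneous; so they preserve the integral closure `Ī`, which is
an ideal because `f` is integral over `I` exactly when `f t` is integral over the Rees algebra
`R[I t] ⊆ R[t]`. Inverting a Vandermonde matrix, some linear combination of rescalings of `f ∈ Ī`
agrees with the degree-`k` component of `f` in all degrees `≤ M`. By Krull's intersection theorem
every ideal of the Noetherian local ring `ℂ[[z]]` is closed in the `𝔪`-adic topology, so the
component lies in `Ī`. The same closedness shows that `Ī` is generated by the homogeneous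
components of its elements.
-/

open Polynomial

theorem Finset.sum_range_succ_eq_add_sum_Icc_sub {M : Type*} [AddCommMonoid M] (g : ℕ → M)
    (m : ℕ) : ∑ i ∈ Finset.range (m + 1), g i = g m + ∑ j ∈ Finset.Icc 1 m, g (m - j) := by
  rw [Finset.sum_range_succ, add_comm, ← Finset.Ico_add_one_right_eq_Icc 1 m,
    Finset.sum_Ico_reflect g 1 le_rfl, Finset.range_eq_Ico]
  simp

section IsIntegralOverIdeal

variable {R : Type*} [CommRing R] {I : Ideal R} {f : R}

theorem IsIntegralOverIdeal.map {S : Type*} [CommRing S] (φ : R →+* S)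
    (hf : IsIntegralOverIdeal I f) : IsIntegralOverIdeal (I.map φ) (φ f) := by
  obtain ⟨m, hm, a, ha, heq⟩ := hf
  refine ⟨m, hm, fun j => φ (a j), fun j hj hjm => ?_, ?_⟩
  · rw [← Ideal.map_pow]
    exact Ideal.mem_map_of_mem φ (ha j hj hjm)
  · simpa using congrArg φ heq

theorem IsIntegralOverIdeal.mono {J : Ideal R} (hIJ : I ≤ J) (hf : IsIntegralOverIdeal I f) :
    IsIntegralOverIdeal J f := by
  obtain ⟨m, hm, a, ha, heq⟩ := hf
  exact ⟨m, hm, a, fun j hj hjm => Ideal.pow_right_mono hIJ j (ha j hj hjm), heq⟩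

theorem IsIntegralOverIdeal.isIntegral_monomial_one (hf : IsIntegralOverIdeal I f) :
    IsIntegral (reesAlgebra I) (monomial 1 f) := by
  classical
  obtain ⟨m, hm, a, ha, heq⟩ := hf
  let b (j : ℕ) : reesAlgebra I :=
    ⟨monomial j (if j ∈ Finset.Icc 1 m then a j else 0), reesAlgebra.monomial_mem.mpr <| by
      split_ifs with hj
      · exact ha j (Finset.mem_Icc.mp hj).1 (Finset.mem_Icc.mp hj).2
      · exact zero_mem _⟩
  refine ⟨X ^ m + ∑ j ∈ Finset.Icc 1 m, C (b j) * X ^ (m - j), ?_, ?_⟩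
  · refine monic_X_pow_add <| (degree_sum_le _ _).trans_lt ?_
    refine (Finset.sup_lt_iff (WithBot.bot_lt_coe m)).mpr fun j hj => ?_
    refine (degree_C_mul_X_pow_le _ _).trans_lt ?_
    exact WithBot.coe_lt_coe.mpr (Nat.sub_lt hm (Finset.mem_Icc.mp hj).1)
  · have hterm : ∀ j ∈ Finset.Icc 1 m, algebraMap (reesAlgebra I) R[X] (b j) *
        monomial 1 f ^ (m - j) = monomial m (a j * f ^ (m - j)) := by
      intro j hj
      change monomial j _ * _ = _
      rw [monomial_pow, monomial_mul_monomial, if_pos hj, one_mul,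
        Nat.add_sub_cancel' (Finset.mem_Icc.mp hj).2]
    rw [← aeval_def, map_add, map_sum, map_pow, aeval_X]
    simp only [map_mul, map_pow, aeval_X, aeval_C]
    rw [Finset.sum_congr rfl hterm, monomial_pow, one_mul, ← map_sum, ← map_add, heq, map_zero]

theorem IsIntegralOverIdeal.of_isIntegral_monomial_one [Nontrivial R]
    (hf : IsIntegral (reesAlgebra I) (monomial 1 f)) : IsIntegralOverIdeal I f := by
  obtain ⟨q, hq, hqf⟩ := hf
  set m := q.natDegree
  have hm : 0 < m := by
    refine Nat.pos_of_ne_zero fun h => ?_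
    rw [Polynomial.eq_one_of_monic_natDegree_zero hq h, eval₂_one] at hqf
    exact one_ne_zero hqf
  refine ⟨m, hm, fun j => (q.coeff (m - j) : R[X]).coeff j, fun j _ _ =>
    (mem_reesAlgebra_iff I _).mp (q.coeff (m - j)).2 j, ?_⟩
  -- the coefficient of `t ^ m` in `q (f t) = 0`
  have hcoeff := congrArg (coeff · m) hqf
  simp only [← aeval_def, aeval_eq_sum_range, finsetSum_coeff, coeff_zero] at hcoeff
  have hterm : ∀ i ∈ Finset.range (m + 1),
      (q.coeff i • monomial 1 f ^ i).coeff m = (q.coeff i : R[X]).coeff (m - i) * f ^ i := by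
    intro i hi
    rw [Algebra.smul_def, monomial_pow, one_mul,
      ← Nat.sub_add_cancel (Nat.lt_succ_iff.mp (Finset.mem_range.mp hi)),
      coeff_mul_monomial, Nat.add_sub_cancel]
    rfl
  rw [Finset.sum_congr rfl hterm, Finset.sum_range_succ_eq_add_sum_Icc_sub, Nat.sub_self,
    hq.coeff_natDegree] at hcoeff
  rw [← hcoeff]
  simp only [OneMemClass.coe_one, coeff_one_zero, one_mul, add_right_inj]
  refine Finset.sum_congr rfl fun j hj => ?_
  rw [Nat.sub_sub_self (Finset.mem_Icc.mp hj).2]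

variable [Nontrivial R]

theorem isIntegralOverIdeal_iff_isIntegral_monomial_one :
    IsIntegralOverIdeal I f ↔ IsIntegral (reesAlgebra I) (monomial 1 f) :=
  ⟨IsIntegralOverIdeal.isIntegral_monomial_one, IsIntegralOverIdeal.of_isIntegral_monomial_one⟩

/-- The elements `f` such that `f t` is integral over the Rees algebra `R[I t]`; being an ideal
is then automatic. -/
noncomputable def Ideal.integralClosure (I : Ideal R) : Ideal R :=
  ((_root_.integralClosure (reesAlgebra I) R[X]).restrictScalars R).toSubmodule.comap
    (monomial 1)

theorem Ideal.mem_integralClosure_iff : f ∈ I.integralClosure ↔ IsIntegralOverIdeal I f :=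
  isIntegralOverIdeal_iff_isIntegral_monomial_one.symm

end IsIntegralOverIdeal

theorem Ideal.mem_of_forall_mem_sup_maximalIdeal_pow {R : Type*} [CommRing R]
    [IsNoetherianRing R] [IsLocalRing R] {K : Ideal R} {x : R}
    (hx : ∀ N : ℕ, x ∈ K ⊔ IsLocalRing.maximalIdeal R ^ N) : x ∈ K := by
  -- Krull's intersection theorem for the finite `R`-module `R ⧸ K`
  rw [← Ideal.Quotient.eq_zero_iff_mem]
  refine IsHausdorff.haus (I := IsLocalRing.maximalIdeal R) inferInstance _ fun N => ?_
  obtain ⟨k, hk, y, hy, rfl⟩ := Submodule.mem_sup.mp (hx N)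
  have hy' : Ideal.Quotient.mk K y = y • (1 : R ⧸ K) := by
    rw [Algebra.smul_def, mul_one]; rfl
  rw [SModEq.zero, map_add, Ideal.Quotient.eq_zero_iff_mem.mpr hk, zero_add, hy']
  exact Submodule.smul_mem_smul hy Submodule.mem_top

theorem exists_sum_mul_pow_eq_ite (K : Type*) [Field K] [Infinite K] {k M : ℕ} (hk : k ≤ M) :
    ∃ t c : Fin (M + 1) → K, ∀ j ≤ M, ∑ i, c i * t i ^ j = if j = k then 1 else 0 := by
  let t : Fin (M + 1) → K := fun i => Infinite.natEmbedding K i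
  have ht : Function.Injective t := (Infinite.natEmbedding K).injective.comp Fin.val_injective
  let V := Matrix.vandermonde t
  have hV : V⁻¹ * V = 1 :=
    Matrix.nonsing_inv_mul V (Ne.isUnit (Matrix.det_vandermonde_ne_zero_iff.mpr ht))
  refine ⟨t, fun i => V⁻¹ ⟨k, by omega⟩ i, fun j hj => ?_⟩
  have := congrFun (congrFun hV ⟨k, by omega⟩) ⟨j, by omega⟩
  rw [Matrix.mul_apply, Matrix.one_apply] at this
  simpa [V, Matrix.vandermonde_apply, eq_comm (a := j)] using this

namespace MvPowerSeries

section CommSemiring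

variable {σ R : Type*} [CommSemiring R]

theorem coeff_rescale_const (r : R) (f : MvPowerSeries σ R) (d : σ →₀ ℕ) :
    coeff d (rescale (Function.const σ r) f) = r ^ d.degree * coeff d f := by
  simp [Finsupp.prod, Finset.prod_pow_eq_pow_sum, Finsupp.degree_apply]

theorem map_rescale_const_span_le {S : Set (MvPolynomial σ R)}
    (hS : ∀ p ∈ S, ∃ k, p.IsHomogeneous k) (r : R) :
    (Ideal.span ((↑) '' S)).map (rescale (Function.const σ r)) ≤ Ideal.span ((↑) '' S) := by
  rw [Ideal.map_span, Ideal.span_le]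
  rintro _ ⟨_, ⟨p, hp, rfl⟩, rfl⟩
  obtain ⟨k, hk⟩ := hS p hp
  rw [rescale_homogeneous_eq_smul (n := k) fun d hd => ?_]
  · exact Submodule.smul_of_tower_mem _ _ (Ideal.subset_span ⟨p, hp, rfl⟩)
  · rw [Finsupp.degree_eq_weight_one]
    exact hk hd

theorem monomial_one_mem_span_range_X_pow (e : σ →₀ ℕ) :
    monomial e (1 : R) ∈ Ideal.span (Set.range X) ^ e.degree := by
  rw [monomial_one_eq, Finsupp.prod, Finsupp.degree_apply, ← Finset.prod_pow_eq_pow_sum]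
  exact Ideal.prod_mem_prod fun i _ =>
    Ideal.pow_mem_pow (Ideal.subset_span (Set.mem_range_self i)) _

variable [Finite σ]

theorem mem_span_range_X_pow_of_coeff_eq_zero {N : ℕ} {f : MvPowerSeries σ R}
    (hf : ∀ d : σ →₀ ℕ, d.degree < N → coeff d f = 0) : f ∈ Ideal.span (Set.range X) ^ N := by
  classical
  -- `f = ∑_{|e| = N} z^e g_e`, where `g_e` collects the terms `c_d z^d` with `φ d = e`,
  -- and `φ d ≤ d` has degree `N` as soon as `N ≤ |d|`
  choose φ hφle hφdeg using fun d : σ →₀ ℕ =>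
    d.exists_le_degree_eq (min N d.degree) (min_le_right _ _)
  let E := (Finsupp.finite_of_degree_eq (σ := σ) N).toFinset
  let g (e : σ →₀ ℕ) : MvPowerSeries σ R := fun c => if φ (c + e) = e then coeff (c + e) f else 0
  have hsum : f = ∑ e ∈ E, monomial e 1 * g e := by
    ext d
    have hterm : ∀ e ∈ E, coeff d (monomial e 1 * g e) = if φ d = e then coeff d f else 0 := by
      intro e _
      rw [coeff_monomial_mul, one_mul]
      by_cases hed : e ≤ d
      · rw [if_pos hed]
        change (if φ (d - e + e) = e then _ else _) = _
        rw [tsub_add_cancel_of_le hed]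
      · rw [if_neg hed, if_neg]
        rintro rfl
        exact hed (hφle d)
    rw [map_sum, Finset.sum_congr rfl hterm, Finset.sum_ite_eq]
    split_ifs with hd
    · rfl
    · refine hf d ?_
      simp only [E, Set.Finite.mem_toFinset, Set.mem_ofPred_eq, hφdeg] at hd
      omega
  rw [hsum]
  refine Ideal.sum_mem _ fun e he => Ideal.mul_mem_right _ _ ?_
  have hdeg : e.degree = N := by simpa [E] using he
  exact hdeg ▸ monomial_one_mem_span_range_X_pow e

theorem exists_isHomogeneous_coe_eq_homogeneousComponent (f : MvPowerSeries σ R) (k : ℕ) :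
    ∃ q : MvPolynomial σ R,
      q.IsHomogeneous k ∧ (q : MvPowerSeries σ R) = homogeneousComponent k f := by
  refine ⟨truncTotal (k + 1) (homogeneousComponent k f), fun d hd => ?_, ?_⟩
  · rw [coeff_truncTotal_eq_ite, coeff_homogeneousComponent] at hd
    have hdeg : d.degree = k := by split_ifs at hd <;> simp_all
    rwa [Finsupp.degree_eq_weight_one] at hdeg
  · ext d
    rw [MvPolynomial.coeff_coe, coeff_truncTotal_eq_ite, coeff_homogeneousComponent]
    split_ifs <;> first | rfl | omega

end CommSemiring

theorem span_range_X_le_maximalIdeal {σ R : Type*} [CommRing R] [IsLocalRing R] :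
    Ideal.span (Set.range X) ≤ IsLocalRing.maximalIdeal (MvPowerSeries σ R) := by
  refine Ideal.span_le.mpr ?_
  rintro _ ⟨i, rfl⟩
  simp [IsLocalRing.mem_maximalIdeal, mem_nonunits_iff, isUnit_iff_constantCoeff]

variable {σ K : Type*} [Field K] [Finite σ]

theorem mem_of_forall_exists_mem_coeff_eq {J : Ideal (MvPowerSeries σ K)} {f : MvPowerSeries σ K}
    (hf : ∀ N : ℕ, ∃ u ∈ J, ∀ d : σ →₀ ℕ, d.degree < N → coeff d f = coeff d u) : f ∈ J := by
  refine Ideal.mem_of_forall_mem_sup_maximalIdeal_pow fun N => ?_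
  obtain ⟨u, hu, hfu⟩ := hf N
  have hsub : f - u ∈ IsLocalRing.maximalIdeal _ ^ N :=
    Ideal.pow_right_mono span_range_X_le_maximalIdeal N <|
      mem_span_range_X_pow_of_coeff_eq_zero fun d hd => by rw [map_sub, hfu d hd, sub_self]
  simpa using Submodule.add_mem_sup hu hsub

theorem homogeneousComponent_mem [Infinite K] {J : Ideal (MvPowerSeries σ K)}
    (hJ : ∀ r : K, ∀ f ∈ J, rescale (Function.const σ r) f ∈ J) {f : MvPowerSeries σ K}
    (hf : f ∈ J) (k : ℕ) : homogeneousComponent k f ∈ J := by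
  refine mem_of_forall_exists_mem_coeff_eq fun N => ?_
  obtain ⟨t, c, hc⟩ := exists_sum_mul_pow_eq_ite K (le_max_right N k)
  refine ⟨∑ i, c i • rescale (Function.const σ (t i)) f,
    Ideal.sum_mem _ fun i _ => Submodule.smul_of_tower_mem _ _ (hJ _ _ hf), fun d hd => ?_⟩
  have hinterp := hc d.degree (hd.le.trans (le_max_left N k))
  simp only [map_sum, map_smul, coeff_rescale_const, smul_eq_mul, coeff_homogeneousComponent,
    ← mul_assoc, ← Finset.sum_mul, hinterp]
  split_ifs <;> simp

theorem eq_span_isHomogeneous_of_homogeneousComponent_mem {J : Ideal (MvPowerSeries σ K)}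
    (hJ : ∀ f ∈ J, ∀ k, homogeneousComponent k f ∈ J) :
    J = Ideal.span ((↑) '' {p : MvPolynomial σ K | (∃ k, p.IsHomogeneous k) ∧ ↑p ∈ J}) := by
  refine le_antisymm (fun f hf => mem_of_forall_exists_mem_coeff_eq fun N =>
    ⟨truncTotal N f, ?_, fun d hd => by rw [MvPolynomial.coeff_coe, coeff_truncTotal _ hd]⟩) ?_
  · rw [truncTotal_eq_sum]
    refine Ideal.sum_mem _ fun k _ => ?_
    obtain ⟨q, hq, hqf⟩ := exists_isHomogeneous_coe_eq_homogeneousComponent f k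
    exact Ideal.subset_span ⟨q, ⟨⟨k, hq⟩, hqf ▸ hJ f hf k⟩, hqf⟩
  · exact Ideal.span_le.mpr (by rintro _ ⟨p, ⟨_, hp⟩, rfl⟩; exact hp)

end MvPowerSeries

theorem homogeneousComponent_eq_homogeneousComponent (n k : ℕ) (f : MvPowerSeries (Fin n) ℂ) :
    homogeneousComponent n k f = MvPowerSeries.homogeneousComponent k f := by
  ext e
  rw [MvPowerSeries.coeff_homogeneousComponent]
  rfl

/-- Let `I` be an ideal of `ℂ[[z_1,…,z_n]]` generated by a family of homogeneous polynomials.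
If `f` is integral over `I`, so is every homogeneous component of `f`; consequently the set of
elements integral over `I` is an ideal generated by homogeneous polynomials. -/
theorem integralClosure_of_homogeneous_ideal_is_homogeneous (n : ℕ)
    (S : Set (MvPolynomial (Fin n) ℂ)) (hS : ∀ p ∈ S, ∃ k, p.IsHomogeneous k)
    (I : Ideal (MvPowerSeries (Fin n) ℂ))
    (hI : I = Ideal.span ((fun p : MvPolynomial (Fin n) ℂ =>
      (p : MvPowerSeries (Fin n) ℂ)) '' S)) :
    (∀ f : MvPowerSeries (Fin n) ℂ, IsIntegralOverIdeal I f →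
      ∀ k : ℕ, IsIntegralOverIdeal I (homogeneousComponent n k f)) ∧
    ∃ J : Ideal (MvPowerSeries (Fin n) ℂ),
      (↑J = {f : MvPowerSeries (Fin n) ℂ | IsIntegralOverIdeal I f}) ∧
      ∃ S' : Set (MvPolynomial (Fin n) ℂ), (∀ p ∈ S', ∃ k, p.IsHomogeneous k) ∧
        J = Ideal.span ((fun p : MvPolynomial (Fin n) ℂ =>
          (p : MvPowerSeries (Fin n) ℂ)) '' S') := by
  have hrescale : ∀ r : ℂ, ∀ f ∈ I.integralClosure,
      MvPowerSeries.rescale (Function.const (Fin n) r) f ∈ I.integralClosure := by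
    intro r f hf
    rw [Ideal.mem_integralClosure_iff] at hf ⊢
    exact (hf.map _).mono (hI ▸ MvPowerSeries.map_rescale_const_span_le hS r)
  have hcomponent : ∀ f ∈ I.integralClosure, ∀ k,
      MvPowerSeries.homogeneousComponent k f ∈ I.integralClosure :=
    fun f hf k => MvPowerSeries.homogeneousComponent_mem hrescale hf k
  refine ⟨fun f hf k => ?_, I.integralClosure, Set.ext fun f => Ideal.mem_integralClosure_iff,
    _, fun p hp => hp.1,
    MvPowerSeries.eq_span_isHomogeneous_of_homogeneousComponent_mem hcomponent⟩
  rw [homogeneousComponent_eq_homogeneousComponent, ← Ideal.mem_integralClosure_iff]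
  exact hcomponent f (Ideal.mem_integralClosure_iff.mpr hf) k
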